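/- arXiv:1712.09414 — 2 statements merged into one kernel-verified Lean document; each statement's English description precedes it below -/
import Mathlib

section
/- In the comma category C of an exact functor F : A → B (objects (a, b, φ : b → F(a))), every object (a, b, φ) fits into a natural short exact sequence 0 → (a, b, φ) → (a, b ⊕ F(a), (φ, id)) → (0, F(a), 0) → 0, where the middle object has structure map (φ, id) : b ⊕ F(a) → F(a) which is surjective. -/
/-!
STATEMENT 8: In the comma category `C = Comma (𝟭 B) F` of an exact functor `F : A ⥤ B`
between abelian categories, every object `(a, b, φ)` fits into a natural short exact sequence
`0 → (a, b, φ) → (a, b ⊞ F a, ψ) → (0, F a, 0) → 0`, where the middle object has the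
surjective structure map `ψ = (φ, id) : b ⊞ F a ⟶ F a`.  The first map is
`(id_a, inl : x ↦ (x,0))` and the second is `(0, snd : (x,y) ↦ y)`; the sequence is short
exact componentwise (in `B`: the split sequence `0 → b → b ⊞ F a → F a → 0`; in `A`:
`0 → a → a → 0 → 0`), with the first map a monomorphism and the second an epimorphism in `C`.
-/

open CategoryTheory CategoryTheory.Limits ZeroObject

theorem stmt8
    {A B : Type*} [Category A] [Category B] [Abelian A] [Abelian B]
    (F : A ⥤ B) [F.Additive] [PreservesFiniteLimits F] [PreservesFiniteColimits F]
    (a : A) (b : B) (φ : b ⟶ F.obj a)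
    -- the three objects of the sequence
    (X M Q : Comma (𝟭 B) F)
    (hX : X = { left := b, right := a, hom := φ })
    (hM : M = { left := b ⊞ F.obj a, right := a, hom := biprod.desc φ (𝟙 (F.obj a)) })
    (hQ : Q = { left := F.obj a, right := 0, hom := 0 })
    -- the two maps
    (i : X ⟶ M) (p : M ⟶ Q)
    (hi₁ : i.left = eqToHom (by rw [hX]) ≫ biprod.inl ≫ eqToHom (by rw [hM]))
    (hi₂ : i.right = eqToHom (by rw [hX]) ≫ 𝟙 a ≫ eqToHom (by rw [hM]))
    (hp₁ : p.left = eqToHom (by rw [hM]) ≫ biprod.snd ≫ eqToHom (by rw [hQ]))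
    (hp₂ : p.right = 0) :
    -- the structure map of the middle object is surjective, i is mono, p is epi,
    -- and the sequence is short exact componentwise
    Epi M.hom ∧ Mono i ∧ Epi p ∧
    (ShortComplex.mk (biprod.inl : b ⟶ b ⊞ F.obj a) (biprod.snd : b ⊞ F.obj a ⟶ F.obj a)
      (by simp)).ShortExact ∧
    (ShortComplex.mk (𝟙 a) (0 : a ⟶ (0 : A)) (by simp)).ShortExact := by
  subst hX hM hQ
  refine ⟨?_, ?_, ?_, ?_, ?_⟩
  · exact epi_of_epi_fac (show biprod.inr ≫ biprod.desc φ (𝟙 (F.obj a)) = 𝟙 _ by simp)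
  · constructor
    intro Z f g h
    have h₁ := congrArg CommaMorphism.left h
    have h₂ := congrArg CommaMorphism.right h
    simp only [Comma.comp_left, Comma.comp_right, hi₁, hi₂, eqToHom_refl,
      Category.comp_id, Category.id_comp] at h₁ h₂
    ext
    · exact (cancel_mono (biprod.inl : b ⟶ b ⊞ F.obj a)).1 h₁
    · exact h₂
  · constructor
    intro Z f g h
    have h₁ := congrArg CommaMorphism.left h
    have h₂ := congrArg CommaMorphism.right h
    simp only [Comma.comp_left, Comma.comp_right, hp₁, hp₂, eqToHom_refl,
      Category.comp_id, Category.id_comp] at h₁ h₂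
    ext
    exact (cancel_epi (biprod.snd : b ⊞ F.obj a ⟶ F.obj a)).1 h₁
  · exact ShortComplex.Splitting.shortExact
      { r := biprod.fst, s := biprod.inr }
  · exact ShortComplex.Splitting.shortExact
      { r := 𝟙 a, s := 0, s_g := (isZero_zero A).eq_of_src _ _ }
end

section
/- Let W : V → ℂ be a polynomial on a finite-dimensional ℂ-vector space V, quasi-homogeneous of degree d with respect to a G_m-action on V with all weights positive, and suppose W has no critical points on V ∖ {0} (W is non-degenerate). Then for γ ∈ GL(V) a finite-order symmetry of W commuting with the G_m-action, the restriction W_γ = W|_{V^γ} to the fixed subspace V^γ also has no critical points on V^γ ∖ {0}. -/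
/-!
At a `γ`-fixed point `x`, the chain rule applied to `W ∘ γ = W` makes the differential `dW_x`
`γ`-invariant. For `γ` of finite order `k`, the average `v ↦ ∑_{j<k} γ^j v` lands in `V^γ`, so a
`γ`-invariant functional vanishing on `V^γ` vanishes everywhere. Hence a critical point of
`W|_{V^γ}` is a critical point of `W`, and non-degeneracy forces it to be `0`.
-/

open MvPolynomial

theorem MvPolynomial.hasFDerivAt_eval {σ 𝕜 : Type*} [Fintype σ] [NontriviallyNormedField 𝕜]
    (p : MvPolynomial σ 𝕜) (x : σ → 𝕜) :
    HasFDerivAt (fun y => eval y p)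
      (∑ i, eval x (pderiv i p) • ContinuousLinearMap.proj (R := 𝕜) (φ := fun _ => 𝕜) i) x := by
  classical
  induction p using MvPolynomial.induction_on with
  | C a =>
    simp only [eval_C]
    refine (hasFDerivAt_const (𝕜 := 𝕜) a x).congr_fderiv ?_
    ext v
    simp
  | add p q hp hq =>
    simp only [eval_add]
    refine (hp.fun_add hq).congr_fderiv ?_
    ext v
    simp [add_mul, Finset.sum_add_distrib]
  | mul_X p j hp =>
    simp only [eval_mul, eval_X]
    refine (hp.fun_mul (hasFDerivAt_apply j x)).congr_fderiv ?_
    ext v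
    simp [Pi.single_apply, add_mul, Finset.sum_add_distrib, Finset.mul_sum, mul_assoc,
      apply_ite (eval x), ite_mul]

theorem HasFDerivAt.comp_eq_of_comp_eq {𝕜 E F : Type*} [NontriviallyNormedField 𝕜]
    [NormedAddCommGroup E] [NormedSpace 𝕜 E] [NormedAddCommGroup F] [NormedSpace 𝕜 F]
    {f : E → F} {f' : E →L[𝕜] F} {x : E} (γ : E →L[𝕜] E) (hf : HasFDerivAt f f' x)
    (hfγ : f ∘ γ = f) (hx : γ x = x) : f'.comp γ = f' := by
  have h := (hx ▸ hf).comp x γ.hasFDerivAt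
  rw [hfγ] at h
  exact h.unique hf

theorem LinearEquiv.apply_sum_range_pow_apply {R V : Type*} [Semiring R] [AddCommGroup V]
    [Module R V] (γ : V ≃ₗ[R] V) {k : ℕ} (hk : γ ^ k = 1) (v : V) :
    γ (∑ j ∈ Finset.range k, (γ ^ j) v) = ∑ j ∈ Finset.range k, (γ ^ j) v := by
  have h := (Finset.sum_range_succ' (fun j => (γ ^ j) v) k).symm.trans
    (Finset.sum_range_succ (fun j => (γ ^ j) v) k)
  simp only [hk, pow_zero, LinearEquiv.coe_one, id, pow_succ', LinearEquiv.mul_apply] at h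
  rw [map_sum]
  exact add_right_cancel h

theorem LinearMap.eq_zero_of_comp_eq_of_pow_eq_one {K V M : Type*} [Field K] [CharZero K]
    [AddCommGroup V] [Module K V] [AddCommGroup M] [Module K M]
    (γ : V ≃ₗ[K] V) {k : ℕ} (hk0 : 0 < k) (hk : γ ^ k = 1) (f : V →ₗ[K] M)
    (hfγ : ∀ v, f (γ v) = f v) (hfix : ∀ v, γ v = v → f v = 0) : f = 0 := by
  ext v
  have hpow : ∀ j : ℕ, f ((γ ^ j) v) = f v := by
    intro j
    induction j with
    | zero => rfl
    | succ j ih => rw [pow_succ', LinearEquiv.mul_apply, hfγ, ih]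
  have h := hfix _ (γ.apply_sum_range_pow_apply hk v)
  simp only [map_sum, hpow, Finset.sum_const, Finset.card_range,
    ← Nat.cast_smul_eq_nsmul K] at h
  exact (smul_eq_zero.mp h).resolve_left (Nat.cast_ne_zero.mpr hk0.ne')

theorem stmt14_general
    (n : ℕ)
    (W : MvPolynomial (Fin n) ℂ)
    -- non-degeneracy: no critical points away from 0
    (hnd : ∀ x : Fin n → ℂ, (∀ i, eval x (pderiv i W) = 0) → x = 0)
    -- γ, a finite-order linear symmetry of W commuting with the G_m-action
    (γ : (Fin n → ℂ) ≃ₗ[ℂ] (Fin n → ℂ))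
    (hfin : ∃ k : ℕ, 0 < k ∧ γ ^ k = 1)
    (hsym : ∀ x : Fin n → ℂ, eval (γ x) W = eval x W) :
    ∀ x : Fin n → ℂ, γ x = x →
      (∀ v : Fin n → ℂ, γ v = v → ∑ i, eval x (pderiv i W) * v i = 0) →
      x = 0 := by
  intro x hx hcrit
  obtain ⟨k, hk0, hk⟩ := hfin
  set dW := ∑ i, eval x (pderiv i W) • ContinuousLinearMap.proj (R := ℂ) (φ := fun _ => ℂ) i
  have hdW : ∀ v, dW v = ∑ i, eval x (pderiv i W) * v i := fun v => by simp [dW]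
  have hdWγ : dW.comp (LinearMap.toContinuousLinearMap γ.toLinearMap) = dW :=
    (hasFDerivAt_eval W x).comp_eq_of_comp_eq _ (funext hsym) hx
  have hdW0 : (dW : (Fin n → ℂ) →ₗ[ℂ] ℂ) = 0 :=
    LinearMap.eq_zero_of_comp_eq_of_pow_eq_one γ hk0 hk dW (fun v => congr($hdWγ v))
      (fun v hv => (hdW v).trans (hcrit v hv))
  refine hnd x fun i => ?_
  simpa [hdW, Pi.single_apply] using LinearMap.congr_fun hdW0 (Pi.single i 1)

theorem stmt14
    (n : ℕ) (w : Fin n → ℕ) (hw : ∀ i, 0 < w i) (d : ℕ)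
    (W : MvPolynomial (Fin n) ℂ)
    -- quasi-homogeneity of degree d for the weights w
    (hW : ∀ (t : ℂ) (x : Fin n → ℂ),
      eval (fun i => t ^ w i * x i) W = t ^ d * eval x W)
    -- non-degeneracy: no critical points away from 0
    (hnd : ∀ x : Fin n → ℂ, (∀ i, eval x (pderiv i W) = 0) → x = 0)
    -- γ, a finite-order linear symmetry of W commuting with the G_m-action
    (γ : (Fin n → ℂ) ≃ₗ[ℂ] (Fin n → ℂ))
    (hfin : ∃ k : ℕ, 0 < k ∧ γ ^ k = 1)
    (hsym : ∀ x : Fin n → ℂ, eval (γ x) W = eval x W)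
    (hγcomm : ∀ (t : ℂ) (x : Fin n → ℂ),
      γ (fun i => t ^ w i * x i) = fun i => t ^ w i * γ x i) :
    ∀ x : Fin n → ℂ, γ x = x →
      (∀ v : Fin n → ℂ, γ v = v → ∑ i, eval x (pderiv i W) * v i = 0) →
      x = 0 :=
  stmt14_general n W hnd γ hfin hsym
end
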